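/- Let λ be a Young diagram inside the k×(n−k) rectangle and let r_{ij}, (i,j) ∈ λ, be any positive integers satisfying r_{ij} > r_{i,j+1} and r_{ij} > r_{i+1,j} (with r_{ij} = 0 for (i,j) ∉ λ). Then X_λ·𝟏 ∈ 𝓛_λ. -/

import Mathlib

open scoped Classical

set_option maxHeartbeats 1000000
set_option synthInstance.maxHeartbeats 1000000

noncomputable section

/-- The field ℚ(v) of rational functions. -/
abbrev F : Type := RatFunc ℚ

/-- The variable v. -/
def v : F := RatFunc.X

/-- The quantum integer [r] = (v^r - v^{-r})/(v - v^{-1}). -/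
def qint (r : ℕ) : F := (v ^ r - v⁻¹ ^ r) / (v - v⁻¹)

/-- Sequences of n signs (`true` = `+`) with exactly k pluses. -/
abbrev Stt (n k : ℕ) := {ε : Fin n → Bool // (Finset.univ.filter fun t => ε t = true).card = k}

/-- The adjacent transposition s_m ∈ S_n (1-based: swaps positions m and m+1). -/
def sperm (n m : ℕ) : Equiv.Perm (Fin n) :=
  if h : 1 ≤ m ∧ m < n then Equiv.swap ⟨m - 1, by omega⟩ ⟨m, h.2⟩ else 1

/-- Action of w ∈ S_n on sequences: (w·ε)_{w(t)} = ε_t. -/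
def actE {n : ℕ} (w : Equiv.Perm (Fin n)) (ε : Fin n → Bool) : Fin n → Bool :=
  fun u => ε (w⁻¹ u)

lemma card_actE {n k : ℕ} (w : Equiv.Perm (Fin n)) (ε : Fin n → Bool)
    (h : (Finset.univ.filter fun t => ε t = true).card = k) :
    (Finset.univ.filter fun t => actE w ε t = true).card = k := by
  rw [← h]
  apply Finset.card_bij (fun t _ => w⁻¹ t)
  · intro a ha
    simp only [Finset.mem_filter, Finset.mem_univ, true_and, actE] at ha ⊢
    exact (Finset.mem_filter.1 ha).2
  · intro a _ b _ hab
    exact (Equiv.injective _) hab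
  · intro b hb
    simp only [Finset.mem_filter, Finset.mem_univ, true_and, actE] at hb ⊢
    exact ⟨w b, Finset.mem_filter.2 ⟨Finset.mem_univ _, by simpa [actE] using hb⟩, by simp⟩

/-- Action of S_n on the set E of sequences with k pluses. -/
def actS {n k : ℕ} (w : Equiv.Perm (Fin n)) (ε : Stt n k) : Stt n k :=
  ⟨actE w ε.1, card_actE w ε.1 ε.2⟩

/-- The module M, free over ℚ(v) with basis E. -/
abbrev M (n k : ℕ) := Stt n k → F

/-- The basis vector of M corresponding to ε ∈ E. -/
def bv {n k : ℕ} (ε : Stt n k) : M n k := Pi.single ε 1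

/-- The sequence 𝟏 = (+,…,+,−,…,−) (k pluses then n−k minuses). -/
def oneSeq (n k : ℕ) : Fin n → Bool := fun t => decide ((t : ℕ) < k)

lemma card_oneSeq (n k : ℕ) (h : k ≤ n) :
    (Finset.univ.filter fun t => oneSeq n k t = true).card = k := by
  have : (Finset.univ.filter fun t => oneSeq n k t = true)
      = Finset.univ.map (Fin.castLEEmb h) := by
    ext t
    simp only [Finset.mem_filter, Finset.mem_univ, true_and, oneSeq, decide_eq_true_eq,
      Finset.mem_map]
    constructor
    · intro ht; exact ⟨⟨t, ht⟩, rfl⟩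
    · rintro ⟨s, rfl⟩; exact s.2
  rw [this, Finset.card_map, Finset.card_univ, Fintype.card_fin]

/-- 𝟏 as an element of E. -/
def oneS (n k : ℕ) (h : k ≤ n) : Stt n k := ⟨oneSeq n k, card_oneSeq n k h⟩

/-- The operator T_m on M (1 ≤ m ≤ n−1), defined on basis elements. -/
def Thk (n k : ℕ) (m : ℕ) : M n k →ₗ[F] M n k :=
  (Pi.basisFun F (Stt n k)).constr ℕ fun ε =>
    if h : 1 ≤ m ∧ m < n then
      let a := ε.1 ⟨m - 1, by omega⟩
      let b := ε.1 ⟨m, h.2⟩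
      if a = true ∧ b = false then bv (actS (sperm n m) ε)
      else if a = b then (-v⁻¹) • bv ε
      else bv (actS (sperm n m) ε) + (v - v⁻¹) • bv ε
    else 0

/-- A Young diagram inside the k×(n−k) rectangle, given by its row lengths
(1-based: row i has lam i boxes). -/
def IsYoung (n k : ℕ) (lam : ℕ → ℕ) : Prop :=
  (∀ i, 1 ≤ i → lam (i + 1) ≤ lam i) ∧ lam 1 ≤ n - k ∧ (∀ i, k < i → lam i = 0)

/-- The boxes of λ, listed row by row from the bottom row to the top row,
each row from its last box to its first (so box (1,1) comes last). -/
def boxList (k : ℕ) (lam : ℕ → ℕ) : List (ℕ × ℕ) :=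
  ((List.range k).reverse.map fun i' =>
    (List.range (lam (i' + 1))).reverse.map fun j' => (i' + 1, j' + 1)).flatten

/-- The word of w_λ: letter k+j−i for box (i,j). -/
def wword (k : ℕ) (lam : ℕ → ℕ) : List ℕ := (boxList k lam).map fun b => k + b.2 - b.1

/-- The permutation w_λ = ∏_{(i,j)∈λ} s_{k+j−i} (box (1,1) rightmost). -/
def wperm (n k : ℕ) (lam : ℕ → ℕ) : Equiv.Perm (Fin n) := ((wword k lam).map (sperm n)).prod

/-- w_λ·𝟏 as an element of E. -/
def wSt (n k : ℕ) (h : k ≤ n) (lam : ℕ → ℕ) : Stt n k := actS (wperm n k lam) (oneS n k h)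

/-- r is the system of shifts of λ: r_{ij} = max(r_{i,j+1}, r_{i+1,j}) + 1 on boxes of λ,
and r_{ij} = 0 off λ. -/
def IsShifts (lam : ℕ → ℕ) (r : ℕ → ℕ → ℕ) : Prop :=
  ∀ i j, r i j = if 1 ≤ i ∧ 1 ≤ j ∧ j ≤ lam i then max (r i (j + 1)) (r (i + 1) j) + 1 else 0

/-- The operator X_λ = ∏_{(i,j)∈λ} (T_{k+j−i} − v^{r_{ij}}/[r_{ij}]), the factor of
box (1,1) applied first. -/
def Xop (n k : ℕ) (lam : ℕ → ℕ) (r : ℕ → ℕ → ℕ) : Module.End F (M n k) :=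
  ((boxList k lam).map fun b =>
    (Thk n k (k + b.2 - b.1) - (v ^ r b.1 b.2 / qint (r b.1 b.2)) • (1 : Module.End F (M n k)) : Module.End F (M n k))).prod

/-- O(v^m): rational functions with a zero of order ≥ m at v = 0. -/
def Ozero (m : ℕ) : Set F :=
  {f | ∃ p q : Polynomial ℚ, Polynomial.eval 0 q ≠ 0 ∧
        f = v ^ m * (algebraMap (Polynomial ℚ) F p / algebraMap (Polynomial ℚ) F q)}

/-- Value of a sequence at the 1-based position t. -/
def posVal {n : ℕ} (ε : Fin n → Bool) (t : ℕ) : Bool :=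
  if h : 1 ≤ t ∧ t ≤ n then ε ⟨t - 1, by omega⟩ else false

/-- a(i) = k + λ_i − i + 1 for 1 ≤ i ≤ k, and a(i) = 0 for i > k. -/
def aF (k : ℕ) (lam : ℕ → ℕ) (i : ℕ) : ℕ := if i ≤ k then k + lam i + 1 - i else 0

/-- The contribution r_t(ε) to the weight. -/
def weightT (k : ℕ) (lam : ℕ → ℕ) (r : ℕ → ℕ → ℕ) {n : ℕ} (ε : Fin n → Bool) (t : ℕ) : ℕ :=
  ∑ i ∈ Finset.Icc 1 k,
    ((if posVal ε t = false ∧ 1 ≤ lam i ∧ t = aF k lam i then r i (lam i) - 1 else 0) +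
     (if posVal ε t = true ∧ aF k lam (i + 1) < t ∧ t < aF k lam i then r i (t + i - k) else 0))

/-- The weight r_λ(ε) = Σ_{t=1}^n r_t(ε). -/
def weight (n k : ℕ) (lam : ℕ → ℕ) (r : ℕ → ℕ → ℕ) (ε : Fin n → Bool) : ℕ :=
  ∑ t ∈ Finset.Icc 1 n, weightT k lam r ε t

/-- 𝓛_λ = Σ_ε O(v^{r_λ(ε)}) ε. -/
def Lset (n k : ℕ) (lam : ℕ → ℕ) (r : ℕ → ℕ → ℕ) : Set (M n k) :=
  {m | ∀ ε : Stt n k, m ε ∈ Ozero (weight n k lam r ε.1)}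

/-- The length (number of inversions) of a permutation. -/
def len {n : ℕ} (w : Equiv.Perm (Fin n)) : ℕ :=
  (Finset.univ.filter fun p : Fin n × Fin n => p.1 < p.2 ∧ w p.2 < w p.1).card

/-- The parabolic subgroup W_J = S_k × S_{n−k}: permutations mapping {1,…,k} to itself. -/
def WJ (n k : ℕ) : Set (Equiv.Perm (Fin n)) :=
  {σ | ∀ t : Fin n, (t : ℕ) < k → ((σ t : ℕ) < k)}

/-- W^J: permutations of minimal length in their coset w·W_J. -/
def Wmin (n k : ℕ) : Set (Equiv.Perm (Fin n)) :=
  {w | ∀ σ ∈ WJ n k, len w ≤ len (w * σ)}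

/-- The variable x_p (1-based position p) in ℚ(v)[x_1,…,x_n]. -/
def xv (n p : ℕ) : MvPolynomial (Fin n) F :=
  if h : 1 ≤ p ∧ p ≤ n then MvPolynomial.X ⟨p - 1, by omega⟩ else 0

/-- Exchange of the variables x_i and x_{i+1} (1-based, 1 ≤ i ≤ n−1). -/
def swapf (n i : ℕ) (f : MvPolynomial (Fin n) F) : MvPolynomial (Fin n) F :=
  if h : 1 ≤ i ∧ i < n then
    MvPolynomial.rename (Equiv.swap ⟨i - 1, by omega⟩ ⟨i, h.2⟩) f
  else f

/-- The divided difference ∂_i f = (f − s_i f)/(x_i − x_{i+1}). -/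
def ddiff (n i : ℕ) (f : MvPolynomial (Fin n) F) : MvPolynomial (Fin n) F :=
  if h : ∃ g, f - swapf n i f = (xv n i - xv n (i + 1)) * g then h.choose else 0

/-- The operator ∇_i f = (v x_{i+1} − v⁻¹ x_i)·∂_i f. -/
def nabla (n i : ℕ) (f : MvPolynomial (Fin n) F) : MvPolynomial (Fin n) F :=
  (MvPolynomial.C v * xv n (i + 1) - MvPolynomial.C v⁻¹ * xv n i) * ddiff n i f

/-- Parenthesis matching: minuses (`false`) are openers, pluses (`true`) are closers;
each plus is matched with the most recent unmatched minus, i.e. each minus with the first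
subsequent unmatched plus.  Returns the list of matched pairs (p,q) of 1-based positions
and the list of unmatched minus positions. -/
def matchAux : List Bool → ℕ → List ℕ → List (ℕ × ℕ) × List ℕ
  | [], _, stack => ([], stack)
  | b :: rest, pos, stack =>
    if b then
      match stack with
      | [] => matchAux rest (pos + 1) []
      | p :: stack' =>
        let res := matchAux rest (pos + 1) stack'
        ((p, pos) :: res.1, res.2)
    else matchAux rest (pos + 1) (pos :: stack)

/-- d(ε) = #{(p,q) : p < q, ε_p = −, ε_q = +}. -/
def dstat {n : ℕ} (ε : Fin n → Bool) : ℕ :=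
  (Finset.univ.filter fun pq : Fin n × Fin n =>
    pq.1 < pq.2 ∧ ε pq.1 = false ∧ ε pq.2 = true).card

/-- The polynomial Q_ε. -/
def Qpoly (n : ℕ) (ε : Fin n → Bool) : MvPolynomial (Fin n) F :=
  MvPolynomial.C (v⁻¹ ^ dstat ε) *
    ((matchAux (List.ofFn ε) 1 []).1.map fun pq =>
        xv n pq.1 - MvPolynomial.C (v ^ (pq.2 + 1 - pq.1)) * xv n pq.2).prod *
    ((matchAux (List.ofFn ε) 1 []).2.map fun p => xv n p).prod

/-- The operator T_m on M′ (the parabolic module induced from T_j ↦ v). -/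
def Thk' (n k : ℕ) (m : ℕ) : M n k →ₗ[F] M n k :=
  (Pi.basisFun F (Stt n k)).constr ℕ fun ε =>
    if h : 1 ≤ m ∧ m < n then
      let a := ε.1 ⟨m - 1, by omega⟩
      let b := ε.1 ⟨m, h.2⟩
      if a = true ∧ b = false then bv (actS (sperm n m) ε)
      else if a = b then v • bv ε
      else bv (actS (sperm n m) ε) + (v - v⁻¹) • bv ε
    else 0

/-- The map Φ : M′ → ℚ(v)[x_1,…,x_n], ε ↦ v^{−d(ε)} ∏_{t : ε_t = −} x_t. -/
def Phi (n k : ℕ) : M n k →ₗ[F] MvPolynomial (Fin n) F :=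
  (Pi.basisFun F (Stt n k)).constr ℕ fun ε =>
    MvPolynomial.C (v⁻¹ ^ dstat ε.1) *
      ∏ t ∈ Finset.univ.filter (fun t => ε.1 t = false), MvPolynomial.X t

/-- The space P(k,n): polynomials homogeneous of total degree n−k, of degree ≤ 1 in each
variable. -/
def Pspace (n k : ℕ) : Set (MvPolynomial (Fin n) F) :=
  {f | f.IsHomogeneous (n - k) ∧ ∀ t : Fin n, f.degreeOf t ≤ 1}


/-!
The boxes of `λ` are added one at a time, in the order in which their factors act: row by row
from the top, each row from left to right. For the diagram `μ` built so far, the partial product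
`y` applied to `𝟏` lies in `𝓛_μ` and is supported on the sequences `ε ≤ w_μ·𝟏` (Bruhat order).

Adding the box `(i, j)` moves the end `m = a(i)` of row `i` one step to the right and changes the
contributions `r_t` only at `t = m, m + 1`. The coefficient of `ε` in `(T_m - v^ρ/[ρ]) y`,
`ρ = r_{ij}`, involves only `y_ε` and `y_{s_m ε}`. Comparing weights case by case on
`(ε_m, ε_{m+1})`, the strict decrease of `r` along rows and columns pays for the factor `v⁻¹` of
`T_m`, and `v^ρ/[ρ] ∈ O(v^(2ρ-1))` covers the case `(+,−)`, where the weight rises by `2ρ - 1`.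
The support condition takes care of the boxes in the first row or column: there the neighbour
`r_{i-1,j}` or `r_{i,j-1}` is missing, but the sequences whose comparison would need it are not
below `w_μ·𝟏`.
-/

lemma algebraMap_ne_zero_of_eval_ne_zero {q : Polynomial ℚ} (hq : q.eval 0 ≠ 0) :
    algebraMap (Polynomial ℚ) F q ≠ 0 := by
  rw [map_ne_zero_iff _ (RatFunc.algebraMap_injective ℚ)]
  rintro rfl
  simp at hq

namespace Ozero

lemma zero_mem (m : ℕ) : (0 : F) ∈ Ozero m := ⟨0, 1, by simp, by simp⟩

lemma one_mem : (1 : F) ∈ Ozero 0 := ⟨1, 1, by simp, by simp⟩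

lemma v_mem : v ∈ Ozero 1 := ⟨1, 1, by simp, by simp⟩

lemma add_mem {m : ℕ} {f g : F} (hf : f ∈ Ozero m) (hg : g ∈ Ozero m) : f + g ∈ Ozero m := by
  obtain ⟨p₁, q₁, hq₁, rfl⟩ := hf
  obtain ⟨p₂, q₂, hq₂, rfl⟩ := hg
  refine ⟨p₁ * q₂ + q₁ * p₂, q₁ * q₂, by simp [hq₁, hq₂], ?_⟩
  rw [← mul_add, div_add_div _ _ (algebraMap_ne_zero_of_eval_ne_zero hq₁)
    (algebraMap_ne_zero_of_eval_ne_zero hq₂), map_add, map_mul, map_mul, map_mul]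

lemma neg_mem {m : ℕ} {f : F} (hf : f ∈ Ozero m) : -f ∈ Ozero m := by
  obtain ⟨p, q, hq, rfl⟩ := hf
  exact ⟨-p, q, hq, by rw [map_neg]; ring⟩

lemma sub_mem {m : ℕ} {f g : F} (hf : f ∈ Ozero m) (hg : g ∈ Ozero m) : f - g ∈ Ozero m :=
  sub_eq_add_neg f g ▸ add_mem hf (neg_mem hg)

lemma mul_mem {m₁ m₂ : ℕ} {f g : F} (hf : f ∈ Ozero m₁) (hg : g ∈ Ozero m₂) :
    f * g ∈ Ozero (m₁ + m₂) := by
  obtain ⟨p₁, q₁, hq₁, rfl⟩ := hf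
  obtain ⟨p₂, q₂, hq₂, rfl⟩ := hg
  refine ⟨p₁ * p₂, q₁ * q₂, by simp [hq₁, hq₂], ?_⟩
  rw [map_mul, map_mul, pow_add, mul_div_mul_comm]
  ring

lemma of_le {m m' : ℕ} (h : m' ≤ m) {f : F} (hf : f ∈ Ozero m) : f ∈ Ozero m' := by
  obtain ⟨p, q, hq, rfl⟩ := hf
  refine ⟨Polynomial.X ^ (m - m') * p, q, hq, ?_⟩
  rw [map_mul, map_pow, RatFunc.algebraMap_X, ← Nat.add_sub_cancel' h, pow_add,
    Nat.add_sub_cancel_left, v, mul_div_assoc]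
  ring

lemma inv_v_mul_mem {m : ℕ} {f : F} (hf : f ∈ Ozero (m + 1)) : v⁻¹ * f ∈ Ozero m := by
  obtain ⟨p, q, hq, rfl⟩ := hf
  refine ⟨p, q, hq, ?_⟩
  rw [pow_succ, mul_comm (v ^ m) v, mul_assoc, ← mul_assoc, inv_mul_cancel₀ RatFunc.X_ne_zero,
    one_mul]

end Ozero

lemma v_pow_ne_one {N : ℕ} (hN : N ≠ 0) : v ^ N ≠ 1 := by
  intro h
  have h' : (Polynomial.X ^ N : Polynomial ℚ) = 1 := by
    apply RatFunc.algebraMap_injective ℚ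
    rwa [map_pow, RatFunc.algebraMap_X, map_one]
  simpa [zero_pow hN] using congrArg (Polynomial.eval 0) h'

/-- `v^ρ/[ρ] = v^(2ρ-1) (v² - 1)/(v^(2ρ) - 1)`. -/
lemma Ozero.v_pow_div_qint_mem {ρ : ℕ} (hρ : 0 < ρ) : v ^ ρ / qint ρ ∈ Ozero (2 * ρ - 1) := by
  obtain ⟨s, rfl⟩ : ∃ s, ρ = s + 1 := ⟨ρ - 1, by omega⟩
  refine ⟨Polynomial.X ^ 2 - 1, Polynomial.X ^ (2 * s + 2) - 1, by simp, ?_⟩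
  have hv : v ≠ 0 := RatFunc.X_ne_zero
  have hden : v ^ (2 * s + 2) - 1 ≠ 0 := sub_ne_zero.2 (v_pow_ne_one (by omega))
  have hnum : v ^ (s + 1) - v⁻¹ ^ (s + 1) = v⁻¹ ^ (s + 1) * (v ^ (2 * s + 2) - 1) := by
    rw [inv_pow]
    field_simp
    ring
  have hX : (RatFunc.X : F) = v := rfl
  simp only [map_sub, map_pow, map_one, RatFunc.algebraMap_X, hX, qint,
    show 2 * (s + 1) - 1 = 2 * s + 1 by omega]
  rw [hnum, div_div_eq_mul_div, mul_div_assoc',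
    div_eq_div_iff (mul_ne_zero (pow_ne_zero _ (inv_ne_zero hv)) hden) hden, inv_pow]
  field_simp
  ring

section Swap

variable {n k m : ℕ}

lemma posVal_of_lt {ε : Fin n → Bool} {t : ℕ} (ht : t < n) : posVal ε (t + 1) = ε ⟨t, ht⟩ := by
  simp [posVal, ht]

lemma actE_actE (w w' : Equiv.Perm (Fin n)) (ε : Fin n → Bool) :
    actE w (actE w' ε) = actE (w * w') ε := by
  ext u
  simp [actE, mul_inv_rev]

lemma actS_sperm_involutive : Function.Involutive (actS (k := k) (sperm n m)) := by
  intro ε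
  apply Subtype.ext
  show actE _ (actE _ ε.1) = ε.1
  have hsq : sperm n m * sperm n m = 1 := by
    unfold sperm
    split_ifs <;> simp
  rw [actE_actE, hsq]
  rfl

lemma sperm_apply_val (hm : 1 ≤ m) (hmn : m < n) (u : Fin n) :
    (sperm n m u : ℕ) = if (u : ℕ) = m - 1 then m else if (u : ℕ) = m then m - 1 else u := by
  rw [show sperm n m = Equiv.swap ⟨m - 1, by omega⟩ ⟨m, hmn⟩ from dif_pos ⟨hm, hmn⟩,
    Equiv.swap_apply_def]
  split_ifs <;> simp only [Fin.ext_iff] at * <;> omega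

lemma posVal_actE_sperm (hm : 1 ≤ m) (hmn : m < n) (ε : Fin n → Bool) (t : ℕ) :
    posVal (actE (sperm n m) ε) t =
      if t = m then posVal ε (m + 1) else if t = m + 1 then posVal ε m else posVal ε t := by
  rw [show sperm n m = Equiv.swap ⟨m - 1, by omega⟩ ⟨m, hmn⟩ from dif_pos ⟨hm, hmn⟩]
  unfold posVal actE
  rw [Equiv.swap_inv]
  simp only [Equiv.swap_apply_def, Fin.ext_iff]
  split_ifs <;> first | omega | congr 1

lemma posVal_actE_sperm_self (hm : 1 ≤ m) (hmn : m < n) (ε : Fin n → Bool) :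
    posVal (actE (sperm n m) ε) m = posVal ε (m + 1) := by
  rw [posVal_actE_sperm hm hmn, if_pos rfl]

lemma posVal_actE_sperm_succ (hm : 1 ≤ m) (hmn : m < n) (ε : Fin n → Bool) :
    posVal (actE (sperm n m) ε) (m + 1) = posVal ε m := by
  rw [posVal_actE_sperm hm hmn, if_neg (by omega), if_pos rfl]

lemma actS_sperm_eq_self_iff (hm : 1 ≤ m) (hmn : m < n) (ε : Stt n k) :
    actS (sperm n m) ε = ε ↔ posVal ε.1 m = posVal ε.1 (m + 1) := by
  constructor
  · intro h
    exact (congrArg (fun e : Stt n k => posVal e.1 m) h).symm.trans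
      (posVal_actE_sperm_self hm hmn ε.1)
  · intro h
    apply Subtype.ext
    funext u
    have := posVal_actE_sperm hm hmn ε.1 (u + 1)
    rw [posVal_of_lt u.2, posVal_of_lt u.2] at this
    refine this.trans ?_
    split_ifs with h1 h2
    · rw [← h, ← h1, posVal_of_lt]
    · rw [h, ← h2, posVal_of_lt]
    · rfl

end Swap

def diagCoeff (a b : Bool) : F := if a = b then -v⁻¹ else if a then 0 else v - v⁻¹

section Hecke

variable {n k m : ℕ}

lemma Thk_bv_apply (hm : 1 ≤ m) (hmn : m < n) (η ε : Stt n k) :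
    Thk n k m (bv η) ε =
      (if posVal ε.1 m = posVal ε.1 (m + 1) then 0
        else if η = actS (sperm n m) ε then 1 else 0) +
        diagCoeff (posVal ε.1 m) (posVal ε.1 (m + 1)) * if η = ε then 1 else 0 := by
  have hpos : ∀ η : Stt n k, η.1 ⟨m - 1, by omega⟩ = posVal η.1 m ∧
      η.1 ⟨m, hmn⟩ = posVal η.1 (m + 1) := fun η =>
    ⟨by rw [posVal, dif_pos ⟨hm, hmn.le⟩], (posVal_of_lt hmn).symm⟩
  rw [bv, ← Pi.basisFun_apply F, Thk, Module.Basis.constr_basis, dif_pos ⟨hm, hmn⟩, (hpos η).1,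
    (hpos η).2]
  have hswap : ε = actS (sperm n m) η ↔ η = actS (sperm n m) ε :=
    ⟨fun h => h ▸ (actS_sperm_involutive η).symm, fun h => h ▸ (actS_sperm_involutive ε).symm⟩
  simp only [ite_apply, Pi.add_apply, Pi.smul_apply, smul_eq_mul, bv, Pi.single_apply, hswap,
    eq_comm (a := ε)]
  by_cases hηε : η = ε
  · subst hηε
    have := actS_sperm_eq_self_iff (k := k) hm hmn η
    cases posVal η.1 m <;> cases posVal η.1 (m + 1) <;> simp_all [diagCoeff, eq_comm (a := η)]
  · by_cases hηs : η = actS (sperm n m) ε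
    · have h1 := posVal_actE_sperm_self hm hmn ε.1
      have h2 := posVal_actE_sperm_succ hm hmn ε.1
      change posVal (actS (sperm n m) ε).1 m = _ at h1
      change posVal (actS (sperm n m) ε).1 (m + 1) = _ at h2
      have hfix := actS_sperm_eq_self_iff (k := k) hm hmn ε
      rw [hηs] at hηε ⊢
      rw [h1, h2]
      simp only [if_true, if_neg hηε, mul_zero, add_zero]
      cases ha : posVal ε.1 m <;> cases hb : posVal ε.1 (m + 1) <;> simp only [ha, hb] at hfix <;>
        first | exact absurd (hfix.2 rfl) hηε | simp
    · simp [hηε, hηs]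

lemma Thk_apply (hm : 1 ≤ m) (hmn : m < n) (x : M n k) (ε : Stt n k) :
    Thk n k m x ε =
      (if posVal ε.1 m = posVal ε.1 (m + 1) then 0 else x (actS (sperm n m) ε)) +
        diagCoeff (posVal ε.1 m) (posVal ε.1 (m + 1)) * x ε := by
  have hx : x = ∑ η, x η • bv η := by
    simp only [bv, ← Pi.single_smul, smul_eq_mul, mul_one, Finset.univ_sum_single]
  conv_lhs => rw [hx]
  simp only [map_sum, map_smul, Finset.sum_apply, Pi.smul_apply, smul_eq_mul,
    Thk_bv_apply hm hmn, mul_add, Finset.sum_add_distrib]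
  split_ifs <;> simp [mul_comm]

end Hecke

lemma Ozero.diagCoeff_sub_mul_mem {a b : Bool} (hab : ¬(a = true ∧ b = false)) {c f : F}
    {w : ℕ} (hc : c ∈ Ozero 1) (hf : f ∈ Ozero (w + 1)) : (diagCoeff a b - c) * f ∈ Ozero w := by
  have hinv := Ozero.inv_v_mul_mem hf
  have hv : v * f ∈ Ozero w := Ozero.of_le (by omega) (Ozero.mul_mem Ozero.v_mem hf)
  have hcf : c * f ∈ Ozero w := Ozero.of_le (by omega) (Ozero.mul_mem hc hf)
  have hneg : (-v⁻¹ - c) * f ∈ Ozero w := by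
    rw [sub_mul, neg_mul]
    exact Ozero.sub_mem (Ozero.neg_mem hinv) hcf
  rcases a with _ | _ <;> rcases b with _ | _
  · exact hneg
  · rw [show diagCoeff false true = v - v⁻¹ from rfl, sub_mul, sub_mul]
    exact Ozero.sub_mem (Ozero.sub_mem hv hinv) hcf
  · exact absurd ⟨rfl, rfl⟩ hab
  · exact hneg

section Weight

variable {n k : ℕ} {μ : ℕ → ℕ} {r : ℕ → ℕ → ℕ}

lemma IsYoung.antitoneOn (hμ : IsYoung n k μ) : AntitoneOn μ {i | 1 ≤ i} :=
  antitoneOn_nat_Ici_of_succ_le hμ.1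

lemma aF_of_le {i : ℕ} (hik : i ≤ k) : aF k μ i = k + μ i + 1 - i := if_pos hik

lemma IsYoung.aF_lt_aF (hμ : IsYoung n k μ) {i j : ℕ} (hi : 1 ≤ i) (hij : i < j)
    (hjk : j ≤ k + 1) : aF k μ j < aF k μ i := by
  have := hμ.antitoneOn (show 1 ≤ i from hi) (show 1 ≤ j by omega) hij.le
  unfold aF
  split_ifs <;> omega

lemma IsYoung.aF_le_aF (hμ : IsYoung n k μ) {i j : ℕ} (hi : 1 ≤ i) (hij : i ≤ j)
    (hjk : j ≤ k + 1) : aF k μ j ≤ aF k μ i := by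
  rcases hij.lt_or_eq with hij | rfl
  · exact (hμ.aF_lt_aF hi hij hjk).le
  · rfl

def weightSummand (k : ℕ) (μ : ℕ → ℕ) (r : ℕ → ℕ → ℕ) {n : ℕ} (ε : Fin n → Bool) (t i : ℕ) : ℕ :=
  (if posVal ε t = false ∧ 1 ≤ μ i ∧ t = aF k μ i then r i (μ i) - 1 else 0) +
    (if posVal ε t = true ∧ aF k μ (i + 1) < t ∧ t < aF k μ i then r i (t + i - k) else 0)

lemma weightT_eq_sum (ε : Fin n → Bool) (t : ℕ) :
    weightT k μ r ε t = ∑ i ∈ Finset.Icc 1 k, weightSummand k μ r ε t i := rfl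

lemma IsYoung.weightSummand_eq_zero (hμ : IsYoung n k μ) (ε : Fin n → Bool) {t i : ℕ}
    (hi : 1 ≤ i) (hik : i ≤ k) (h : t ≤ aF k μ (i + 1) ∨ aF k μ i < t) :
    weightSummand k μ r ε t i = 0 := by
  have := hμ.aF_lt_aF hi (lt_add_one i) (by omega)
  unfold weightSummand
  rw [if_neg (by omega), if_neg (by omega)]

lemma IsYoung.weightT_eq_weightSummand (hμ : IsYoung n k μ) (ε : Fin n → Bool) {t i : ℕ}
    (hi : 1 ≤ i) (hik : i ≤ k) (ht : aF k μ (i + 1) < t) (ht' : t ≤ aF k μ i) :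
    weightT k μ r ε t = weightSummand k μ r ε t i := by
  rw [weightT_eq_sum, Finset.sum_eq_single_of_mem i (Finset.mem_Icc.2 ⟨hi, hik⟩)]
  intro j hj hji
  obtain ⟨hj, hjk⟩ := Finset.mem_Icc.1 hj
  apply hμ.weightSummand_eq_zero ε hj hjk
  rcases lt_or_gt_of_ne hji with hji | hji
  · exact .inl (ht'.trans (hμ.aF_le_aF (by omega) hji (by omega)))
  · exact .inr ((hμ.aF_le_aF (by omega) hji (by omega)).trans_lt ht)

lemma IsYoung.weightT_eq_zero_of_aF_lt (hμ : IsYoung n k μ) (ε : Fin n → Bool) {t : ℕ}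
    (ht : aF k μ 1 < t) : weightT k μ r ε t = 0 := by
  refine Finset.sum_eq_zero fun i hi => ?_
  obtain ⟨hi, hik⟩ := Finset.mem_Icc.1 hi
  refine hμ.weightSummand_eq_zero ε hi hik (.inr ?_)
  exact (hμ.aF_le_aF le_rfl hi (by omega)).trans_lt ht

lemma weightT_eq_zero_of_forall_eq_zero (hμ : ∀ i, 1 ≤ i → μ i = 0) (ε : Fin n → Bool) (t : ℕ) :
    weightT k μ r ε t = 0 := by
  rw [weightT_eq_sum]
  refine Finset.sum_eq_zero fun i hi => ?_
  obtain ⟨hi, hik⟩ := Finset.mem_Icc.1 hi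
  unfold weightSummand aF
  rw [hμ i hi, hμ (i + 1) (by omega)]
  split_ifs <;> omega

lemma weightT_congr {ε η : Fin n → Bool} {t : ℕ} (h : posVal ε t = posVal η t) :
    weightT k μ r ε t = weightT k μ r η t := by
  simp only [weightT, h]

lemma weight_eq_add_add_sum (ε : Fin n → Bool) {m : ℕ} (hm : 1 ≤ m) (hmn : m < n) :
    weight n k μ r ε = weightT k μ r ε m + weightT k μ r ε (m + 1) +
      ∑ t ∈ ((Finset.Icc 1 n).erase m).erase (m + 1), weightT k μ r ε t := by
  rw [weight, ← Finset.add_sum_erase _ _ (Finset.mem_Icc.2 ⟨hm, hmn.le⟩),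
    ← Finset.add_sum_erase _ _ (Finset.mem_erase.2 ⟨by omega, Finset.mem_Icc.2 ⟨by omega, hmn⟩⟩),
    add_assoc]

lemma IsYoung.weightT_aF (hμ : IsYoung n k μ) (ε : Fin n → Bool) {i : ℕ} (hi : 1 ≤ i)
    (hik : i ≤ k) :
    weightT k μ r ε (aF k μ i) =
      if posVal ε (aF k μ i) = false ∧ 1 ≤ μ i then r i (μ i) - 1 else 0 := by
  rw [hμ.weightT_eq_weightSummand ε hi hik (hμ.aF_lt_aF hi (lt_add_one i) (by omega)) le_rfl]
  simp only [weightSummand, lt_irrefl, and_false, if_false, add_zero, and_true]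

end Weight

/-- The number of pluses of `ε` at the (1-based) positions `≥ s`. -/
def plusesFrom {n : ℕ} (ε : Fin n → Bool) (s : ℕ) : ℕ :=
  (Finset.univ.filter fun t : Fin n => s ≤ (t : ℕ) + 1 ∧ ε t = true).card

/-- `ε ≤ w_μ·𝟏` in the Bruhat order, where `w_μ·𝟏` has its pluses at the positions
`a(1) > ⋯ > a(k)`. -/
def BruhatLE (k : ℕ) (μ : ℕ → ℕ) {n : ℕ} (ε : Fin n → Bool) : Prop :=
  ∀ s, plusesFrom ε s ≤ ((Finset.Icc 1 k).filter fun i => s ≤ aF k μ i).card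

section Bruhat

variable {n k m : ℕ} {μ μ' : ℕ → ℕ}

lemma plusesFrom_actE (w : Equiv.Perm (Fin n)) (ε : Fin n → Bool) (s : ℕ) :
    plusesFrom (actE w ε) s =
      (Finset.univ.filter fun u : Fin n => s ≤ (w u : ℕ) + 1 ∧ ε u = true).card := by
  rw [plusesFrom]
  exact Finset.card_equiv w.symm fun t => by
    rw [Finset.mem_filter, Finset.mem_filter]
    simp only [Finset.mem_univ, true_and, actE, Equiv.Perm.inv_def,
      Equiv.apply_symm_apply]

lemma plusesFrom_actE_sperm_of_ne (hm : 1 ≤ m) (hmn : m < n) (ε : Fin n → Bool) {s : ℕ}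
    (hs : s ≠ m + 1) : plusesFrom (actE (sperm n m) ε) s = plusesFrom ε s := by
  rw [plusesFrom_actE, plusesFrom]
  congr 1
  refine Finset.filter_congr fun u _ => and_congr_left fun _ => ?_
  rw [sperm_apply_val hm hmn]
  split_ifs <;> omega

lemma plusesFrom_actE_sperm_le (hm : 1 ≤ m) (hmn : m < n) (ε : Fin n → Bool) (s : ℕ) :
    plusesFrom (actE (sperm n m) ε) s ≤ plusesFrom ε s + 1 := by
  rw [plusesFrom_actE, plusesFrom]
  refine (Finset.card_le_card fun u hu => ?_).trans (Finset.card_insert_le ⟨m - 1, by omega⟩ _)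
  simp only [Finset.mem_filter, Finset.mem_univ, true_and, Finset.mem_insert, Fin.ext_iff] at hu ⊢
  rw [sperm_apply_val hm hmn] at hu
  split_ifs at hu with h1 h2
  · exact .inl h1
  · exact .inr ⟨by omega, hu.2⟩
  · exact .inr hu

lemma BruhatLE.mono (h : ∀ i, aF k μ i ≤ aF k μ' i) {ε : Fin n → Bool} (hε : BruhatLE k μ ε) :
    BruhatLE k μ' ε := fun s =>
  (hε s).trans <| Finset.card_le_card <| Finset.monotone_filter_right _ fun i _ hi => hi.trans (h i)

lemma bruhatLE_oneSeq (μ : ℕ → ℕ) : BruhatLE k μ (oneSeq n k) := by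
  intro s
  refine Finset.card_le_card_of_injOn (fun t : Fin n => k - (t : ℕ)) (fun t ht => ?_)
    (fun t ht u hu htu => ?_)
  · simp only [Finset.coe_filter, Finset.mem_univ, true_and, Set.mem_ofPred_eq, oneSeq,
      decide_eq_true_eq] at ht
    simp only [Finset.coe_filter, Finset.mem_Icc, Set.mem_ofPred_eq, aF_of_le (Nat.sub_le k t)]
    omega
  · simp only [Finset.coe_filter, Finset.mem_univ, true_and, Set.mem_ofPred_eq, oneSeq,
      decide_eq_true_eq] at ht hu
    exact Fin.ext (by simp only at htu; omega)

lemma BruhatLE.posVal_eq_false (hμ : IsYoung n k μ) {ε : Fin n → Bool} (hε : BruhatLE k μ ε)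
    {t : ℕ} (ht : aF k μ 1 < t) : posVal ε t = false := by
  by_contra hne
  rw [Bool.not_eq_false] at hne
  have htn : 1 ≤ t ∧ t ≤ n := by
    by_contra h
    simp [posVal, h] at hne
  have hpos : 0 < plusesFrom ε t := by
    refine Finset.card_pos.2 ⟨⟨t - 1, by omega⟩, ?_⟩
    rw [← Nat.sub_add_cancel htn.1, posVal_of_lt] at hne
    simpa [htn.1] using hne
  have hzero : ((Finset.Icc 1 k).filter fun i => t ≤ aF k μ i) = ∅ := by
    refine Finset.filter_eq_empty_iff.2 fun i hi => ?_
    have := hμ.aF_le_aF le_rfl (Finset.mem_Icc.1 hi).1 (by simp at hi; omega)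
    omega
  have := hε t
  rw [hzero, Finset.card_empty] at this
  omega

lemma BruhatLE.posVal_aF_eq_true (hμ : IsYoung n k μ) {ε : Fin n → Bool} (hε : BruhatLE k μ ε)
    (hcard : (Finset.univ.filter fun t => ε t = true).card = k) {i : ℕ} (hi : 1 ≤ i)
    (hik : i ≤ k) (hμi : μ i = 0) : posVal ε (aF k μ i) = true := by
  have hp : aF k μ i = k + 1 - i := by rw [aF_of_le hik, hμi]
  -- With a minus at `a(i) = k + 1 - i`, the `k` pluses of `ε` would have to fit into the
  -- `k - i` positions before `a(i)` and the at most `i - 1` pluses that `hε` allows after it.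
  by_contra hne
  rw [Bool.not_eq_true] at hne
  have hsplit : (Finset.univ.filter fun t => ε t = true) ⊆
      (Finset.univ.filter fun t : Fin n => (t : ℕ) < k - i) ∪
        Finset.univ.filter fun t : Fin n => aF k μ i + 1 ≤ (t : ℕ) + 1 ∧ ε t = true := by
    intro t ht
    simp only [Finset.mem_filter, Finset.mem_univ, true_and, Finset.mem_union] at ht ⊢
    by_cases htp : (t : ℕ) + 1 = aF k μ i
    · rw [← htp, posVal_of_lt t.2, ht] at hne
      exact absurd hne (by decide)
    · rcases lt_or_ge (t : ℕ) (k - i) with h | h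
      · exact .inl h
      · exact .inr ⟨by omega, ht⟩
  have hlow : (Finset.univ.filter fun t : Fin n => (t : ℕ) < k - i).card ≤ k - i := by
    simpa using Finset.card_le_card_of_injOn (t := Finset.range (k - i)) (fun t : Fin n => (t : ℕ))
      (fun t ht => by simpa using ht) (fun t _ u _ h => Fin.ext h)
  have hhigh : ((Finset.Icc 1 k).filter fun j => aF k μ i + 1 ≤ aF k μ j) ⊆
      Finset.Icc 1 (i - 1) := by
    intro j hj
    simp only [Finset.mem_filter, Finset.mem_Icc] at hj ⊢
    by_contra hji
    have := hμ.aF_le_aF hi (show i ≤ j by omega) (by omega)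
    omega
  have := (Finset.card_le_card hsplit).trans (Finset.card_union_le _ _)
  have := (hε (aF k μ i + 1)).trans (Finset.card_le_card hhigh)
  simp only [Nat.card_Icc] at this
  unfold plusesFrom at *
  omega

end Bruhat

def WeightBounded (n k : ℕ) (μ : ℕ → ℕ) (r : ℕ → ℕ → ℕ) (x : M n k) : Prop :=
  x ∈ Lset n k μ r ∧ ∀ ε : Stt n k, x ε ≠ 0 → BruhatLE k μ ε.1

structure AddsBox (n k : ℕ) (μ μ' : ℕ → ℕ) (i : ℕ) : Prop where
  isYoung : IsYoung n k μ
  isYoung' : IsYoung n k μ'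
  one_le : 1 ≤ i
  le : i ≤ k
  apply_self : μ' i = μ i + 1
  apply_of_ne : ∀ j, j ≠ i → μ' j = μ j

namespace AddsBox

variable {n k i : ℕ} {μ μ' : ℕ → ℕ}

lemma aF_self (h : AddsBox n k μ μ' i) : aF k μ' i = aF k μ i + 1 := by
  rw [aF_of_le h.le, aF_of_le h.le, h.apply_self]
  have := h.le
  omega

lemma aF_of_ne (h : AddsBox n k μ μ' i) {j : ℕ} (hj : j ≠ i) : aF k μ' j = aF k μ j := by
  simp only [aF, h.apply_of_ne j hj]

lemma aF_le_aF (h : AddsBox n k μ μ' i) (j : ℕ) : aF k μ j ≤ aF k μ' j := by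
  rcases eq_or_ne j i with rfl | hj
  · exact h.aF_self ▸ Nat.le_succ _
  · exact (h.aF_of_ne hj).ge

lemma one_le_aF (h : AddsBox n k μ μ' i) : 1 ≤ aF k μ i := by
  rw [aF_of_le h.le]
  have := h.le
  omega

lemma aF_lt (h : AddsBox n k μ μ' i) : aF k μ i < n := by
  have hi := h.one_le
  have hik := h.le
  have h1 := h.isYoung'.aF_le_aF le_rfl hi (by omega)
  rw [h.aF_self, aF_of_le (μ := μ') (i := 1) (by omega)] at h1
  have h2 := h.isYoung'.2.1
  have h3 := h.isYoung'.antitoneOn (show 1 ≤ 1 from le_rfl) hi hi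
  rw [h.apply_self] at h3
  omega

variable {r : ℕ → ℕ → ℕ}

lemma weightT_succ (h : AddsBox n k μ μ' i) (ε : Fin n → Bool) :
    weightT k μ r ε (aF k μ i + 1) =
      if 2 ≤ i ∧ posVal ε (aF k μ i + 1) = true then r (i - 1) (μ i + 1) else 0 := by
  have hi := h.one_le
  have hik := h.le
  by_cases hi2 : 2 ≤ i
  · have hrow : μ i + 1 ≤ μ (i - 1) := by
      have := h.isYoung'.1 (i - 1) (by omega)
      rw [Nat.sub_add_cancel hi, h.apply_self, h.apply_of_ne _ (by omega)] at this
      exact this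
    have hlo : aF k μ (i - 1 + 1) < aF k μ i + 1 := by rw [Nat.sub_add_cancel hi]; omega
    have hhi : aF k μ i + 1 < aF k μ (i - 1) := by
      rw [aF_of_le hik, aF_of_le (by omega)]
      omega
    rw [h.isYoung.weightT_eq_weightSummand ε (by omega) (by omega) hlo hhi.le, weightSummand,
      if_neg (by omega), zero_add, aF_of_le hik,
      show k + μ i + 1 - i + 1 + (i - 1) - k = μ i + 1 by omega]
    simp only [hi2, true_and, ← aF_of_le hik, hhi, and_true, Nat.sub_add_cancel hi,
      lt_add_one]
  · rw [h.isYoung.weightT_eq_zero_of_aF_lt ε (by rw [show i = 1 by omega]; omega),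
      if_neg (by omega)]

lemma weightT'_self (h : AddsBox n k μ μ' i) (ε : Fin n → Bool) :
    weightT k μ' r ε (aF k μ i) =
      if posVal ε (aF k μ i) = true then r i (μ i + 1) else 0 := by
  have hi := h.one_le
  have hik := h.le
  have hlo : aF k μ' (i + 1) < aF k μ i := by
    rw [h.aF_of_ne (by omega)]
    exact h.isYoung.aF_lt_aF hi (lt_add_one i) (by omega)
  rw [h.isYoung'.weightT_eq_weightSummand ε hi hik hlo (h.aF_self ▸ Nat.le_succ _),
    weightSummand, if_neg (by rw [h.aF_self]; omega), zero_add, h.aF_self]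
  simp only [hlo, lt_add_one, and_true]
  rw [aF_of_le hik, show k + μ i + 1 - i + i - k = μ i + 1 by omega]

lemma weightT'_succ (h : AddsBox n k μ μ' i) (ε : Fin n → Bool) :
    weightT k μ' r ε (aF k μ i + 1) =
      if posVal ε (aF k μ i + 1) = false then r i (μ i + 1) - 1 else 0 := by
  rw [← h.aF_self, h.isYoung'.weightT_aF ε h.one_le h.le, h.apply_self]
  simp only [le_add_iff_nonneg_left, zero_le, and_true]

lemma weightT'_of_ne (h : AddsBox n k μ μ' i) (ε : Fin n → Bool) {t : ℕ}
    (ht : t ≠ aF k μ i) (ht' : t ≠ aF k μ i + 1) :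
    weightT k μ' r ε t = weightT k μ r ε t := by
  refine Finset.sum_congr rfl fun j _ => ?_
  change weightSummand k μ' r ε t j = weightSummand k μ r ε t j
  unfold weightSummand
  by_cases hji : j = i
  · subst hji
    have e1 : ¬(posVal ε t = false ∧ 1 ≤ μ' j ∧ t = aF k μ j + 1) := fun h => ht' h.2.2
    have e2 : ¬(posVal ε t = false ∧ 1 ≤ μ j ∧ t = aF k μ j) := fun h => ht h.2.2
    rw [h.aF_self, h.aF_of_ne (j := j + 1) (by omega), if_neg e1, if_neg e2]
    congr 1
    exact if_congr (and_congr_right fun _ => and_congr_right fun _ => by omega) rfl rfl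
  · rw [h.apply_of_ne j hji, h.aF_of_ne hji]
    by_cases hj1 : j + 1 = i
    · rw [hj1, h.aF_self]
      congr 1
      exact if_congr (and_congr_right fun _ => and_congr_left fun _ => by omega) rfl rfl
    · rw [h.aF_of_ne hj1]

lemma exists_weight_eq (h : AddsBox n k μ μ' i) (ε : Fin n → Bool) : ∃ R,
    weight n k μ r ε = weightT k μ r ε (aF k μ i) + weightT k μ r ε (aF k μ i + 1) + R ∧
    weight n k μ' r ε = weightT k μ' r ε (aF k μ i) + weightT k μ' r ε (aF k μ i + 1) + R ∧
    weight n k μ r (actE (sperm n (aF k μ i)) ε) =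
      weightT k μ r (actE (sperm n (aF k μ i)) ε) (aF k μ i) +
        weightT k μ r (actE (sperm n (aF k μ i)) ε) (aF k μ i + 1) + R := by
  have hm := h.one_le_aF
  have hmn := h.aF_lt
  refine ⟨_, weight_eq_add_add_sum ε hm hmn, ?_, ?_⟩ <;>
    rw [weight_eq_add_add_sum _ hm hmn] <;> congr 1 <;>
    refine Finset.sum_congr rfl fun t ht => ?_ <;>
    obtain ⟨ht1, ht2, -⟩ := Finset.mem_erase.1 ht |>.imp_right Finset.mem_erase.1
  · exact h.weightT'_of_ne ε ht2 ht1
  · exact weightT_congr (by rw [posVal_actE_sperm hm hmn, if_neg ht2, if_neg ht1])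

lemma weightT_self_eq_zero (h : AddsBox n k μ μ' i) {ε : Fin n → Bool}
    (ha : posVal ε (aF k μ i) = true) : weightT k μ r ε (aF k μ i) = 0 := by
  rw [h.isYoung.weightT_aF ε h.one_le h.le, ha]
  simp

lemma weightT_succ_eq_zero (h : AddsBox n k μ μ' i) {ε : Fin n → Bool}
    (hb : posVal ε (aF k μ i + 1) = false) : weightT k μ r ε (aF k μ i + 1) = 0 := by
  rw [h.weightT_succ, hb]
  simp

lemma bruhatLE_actE_sperm (h : AddsBox n k μ μ' i) {ε : Fin n → Bool}
    (hε : BruhatLE k μ ε) : BruhatLE k μ' (actE (sperm n (aF k μ i)) ε) := by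
  have hm := h.one_le_aF
  have hmn := h.aF_lt
  intro s
  rcases eq_or_ne s (aF k μ i + 1) with rfl | hs
  · have hins : insert i ((Finset.Icc 1 k).filter fun j => aF k μ i + 1 ≤ aF k μ j) ⊆
        (Finset.Icc 1 k).filter fun j => aF k μ i + 1 ≤ aF k μ' j := by
      refine Finset.insert_subset (Finset.mem_filter.2 ⟨Finset.mem_Icc.2 ⟨h.one_le, h.le⟩,
        h.aF_self.ge⟩) (Finset.monotone_filter_right _ fun j _ hj => hj.trans (h.aF_le_aF j))
    have hi : i ∉ (Finset.Icc 1 k).filter fun j => aF k μ i + 1 ≤ aF k μ j := by simp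
    calc plusesFrom (actE (sperm n (aF k μ i)) ε) (aF k μ i + 1)
        ≤ plusesFrom ε (aF k μ i + 1) + 1 := plusesFrom_actE_sperm_le hm hmn ε _
      _ ≤ ((Finset.Icc 1 k).filter fun j => aF k μ i + 1 ≤ aF k μ j).card + 1 :=
          Nat.add_le_add_right (hε _) 1
      _ ≤ _ := (Finset.card_insert_of_notMem hi).symm.le.trans (Finset.card_le_card hins)
  · rw [plusesFrom_actE_sperm_of_ne hm hmn ε hs]
    exact BruhatLE.mono h.aF_le_aF hε s

lemma le_weightT_self (h : AddsBox n k μ μ' i) (hrow : 1 ≤ μ i → r i (μ i + 1) < r i (μ i))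
    {ε : Stt n k} (hε : BruhatLE k μ ε.1) (ha : posVal ε.1 (aF k μ i) = false) :
    r i (μ i + 1) ≤ weightT k μ r ε.1 (aF k μ i) := by
  have hμi : 1 ≤ μ i := by
    by_contra h0
    have := hε.posVal_aF_eq_true h.isYoung ε.2 h.one_le h.le (by omega)
    rw [ha] at this
    exact absurd this (by decide)
  rw [h.isYoung.weightT_aF ε.1 h.one_le h.le, if_pos ⟨ha, hμi⟩]
  have := hrow hμi
  omega

lemma lt_weightT_succ (h : AddsBox n k μ μ' i)
    (hcol : 2 ≤ i → r i (μ i + 1) < r (i - 1) (μ i + 1)) {ε : Fin n → Bool}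
    (hε : BruhatLE k μ ε) (hb : posVal ε (aF k μ i + 1) = true) :
    r i (μ i + 1) < weightT k μ r ε (aF k μ i + 1) := by
  have hi : 2 ≤ i := by
    by_contra hi
    have := hε.posVal_eq_false h.isYoung (t := aF k μ i + 1)
      (by rw [show i = 1 by have := h.one_le; omega]; omega)
    rw [hb] at this
    exact absurd this (by decide)
  rw [h.weightT_succ, if_pos ⟨hi, hb⟩]
  exact hcol hi

lemma diagTerm_mem (h : AddsBox n k μ μ' i) (hρ : 0 < r i (μ i + 1))
    (hrow : 1 ≤ μ i → r i (μ i + 1) < r i (μ i))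
    (hcol : 2 ≤ i → r i (μ i + 1) < r (i - 1) (μ i + 1)) {x : M n k}
    (hx : WeightBounded n k μ r x) (ε : Stt n k) :
    (diagCoeff (posVal ε.1 (aF k μ i)) (posVal ε.1 (aF k μ i + 1)) -
        v ^ r i (μ i + 1) / qint (r i (μ i + 1))) * x ε ∈ Ozero (weight n k μ' r ε.1) := by
  by_cases hx0 : x ε = 0
  · rw [hx0, mul_zero]
    exact Ozero.zero_mem _
  have hε := hx.2 ε hx0
  have hxε := hx.1 ε
  have hc := Ozero.v_pow_div_qint_mem hρ
  obtain ⟨R, hw, hw', -⟩ := h.exists_weight_eq (r := r) ε.1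
  rw [h.weightT'_self, h.weightT'_succ] at hw'
  cases ha : posVal ε.1 (aF k μ i) <;> cases hb : posVal ε.1 (aF k μ i + 1) <;>
    simp only [ha, hb, ↓reduceIte, Bool.true_eq_false, Bool.false_eq_true] at hw'
  · have := h.le_weightT_self hrow hε ha
    have := h.weightT_succ_eq_zero (r := r) hb
    exact Ozero.diagCoeff_sub_mul_mem (by simp) (Ozero.of_le (by omega) hc)
      (Ozero.of_le (by omega) hxε)
  · have := h.le_weightT_self hrow hε ha
    have := h.lt_weightT_succ hcol hε hb
    exact Ozero.diagCoeff_sub_mul_mem (by simp) (Ozero.of_le (by omega) hc)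
      (Ozero.of_le (by omega) hxε)
  · have := h.weightT_self_eq_zero (r := r) ha
    have := h.weightT_succ_eq_zero (r := r) hb
    rw [show diagCoeff true false = 0 from rfl, zero_sub, neg_mul]
    exact Ozero.neg_mem (Ozero.of_le (by omega) (Ozero.mul_mem hc hxε))
  · have := h.weightT_self_eq_zero (r := r) ha
    have := h.lt_weightT_succ hcol hε hb
    exact Ozero.diagCoeff_sub_mul_mem (by simp) (Ozero.of_le (by omega) hc)
      (Ozero.of_le (by omega) hxε)

lemma crossTerm_mem (h : AddsBox n k μ μ' i) (hrow : 1 ≤ μ i → r i (μ i + 1) < r i (μ i))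
    (hcol : 2 ≤ i → r i (μ i + 1) < r (i - 1) (μ i + 1)) {x : M n k}
    (hx : WeightBounded n k μ r x) (ε : Stt n k)
    (hab : posVal ε.1 (aF k μ i) ≠ posVal ε.1 (aF k μ i + 1)) :
    x (actS (sperm n (aF k μ i)) ε) ∈ Ozero (weight n k μ' r ε.1) := by
  set sε := actS (sperm n (aF k μ i)) ε
  by_cases hx0 : x sε = 0
  · rw [hx0]
    exact Ozero.zero_mem _
  have hε := hx.2 sε hx0
  have hxε := hx.1 sε
  have ha := posVal_actE_sperm_self h.one_le_aF h.aF_lt ε.1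
  have hb := posVal_actE_sperm_succ h.one_le_aF h.aF_lt ε.1
  obtain ⟨R, -, hw', hws⟩ := h.exists_weight_eq (r := r) ε.1
  rw [h.weightT'_self, h.weightT'_succ] at hw'
  change x sε ∈ _ at hxε
  change weight n k μ r sε.1 = weightT k μ r sε.1 _ + weightT k μ r sε.1 _ + R at hws
  change posVal sε.1 _ = _ at ha hb
  cases ha' : posVal ε.1 (aF k μ i) <;> cases hb' : posVal ε.1 (aF k μ i + 1) <;>
    simp only [ha', hb', ↓reduceIte, Bool.true_eq_false, Bool.false_eq_true, ne_eq, not_true]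
      at hw' hab ha hb
  · have := h.weightT_self_eq_zero (r := r) ha
    have := h.weightT_succ_eq_zero (r := r) hb
    exact Ozero.of_le (by omega) hxε
  · have := h.le_weightT_self hrow hε ha
    have := h.lt_weightT_succ hcol hε hb
    exact Ozero.of_le (by omega) hxε

theorem weightBounded_step (h : AddsBox n k μ μ' i) (hρ : 0 < r i (μ i + 1))
    (hrow : 1 ≤ μ i → r i (μ i + 1) < r i (μ i))
    (hcol : 2 ≤ i → r i (μ i + 1) < r (i - 1) (μ i + 1)) {x : M n k}
    (hx : WeightBounded n k μ r x) :
    WeightBounded n k μ' r ((Thk n k (aF k μ i) -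
      (v ^ r i (μ i + 1) / qint (r i (μ i + 1))) • (1 : Module.End F (M n k))) x) := by
  have happly : ∀ ε : Stt n k, ((Thk n k (aF k μ i) -
      (v ^ r i (μ i + 1) / qint (r i (μ i + 1))) • (1 : Module.End F (M n k))) x) ε =
      (if posVal ε.1 (aF k μ i) = posVal ε.1 (aF k μ i + 1) then 0
        else x (actS (sperm n (aF k μ i)) ε)) +
        (diagCoeff (posVal ε.1 (aF k μ i)) (posVal ε.1 (aF k μ i + 1)) -
          v ^ r i (μ i + 1) / qint (r i (μ i + 1))) * x ε := by
    intro ε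
    rw [LinearMap.sub_apply, LinearMap.smul_apply, Module.End.one_apply, Pi.sub_apply,
      Thk_apply h.one_le_aF h.aF_lt, Pi.smul_apply, smul_eq_mul]
    ring
  refine ⟨fun ε => ?_, fun ε hne => ?_⟩
  · rw [happly]
    refine Ozero.add_mem ?_ (h.diagTerm_mem hρ hrow hcol hx ε)
    split_ifs with hab
    · exact Ozero.zero_mem _
    · exact h.crossTerm_mem hrow hcol hx ε hab
  · rw [happly] at hne
    by_cases hx0 : x ε = 0
    · rw [hx0, mul_zero, add_zero] at hne
      split_ifs at hne with hab
      · exact absurd rfl hne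
      · have hswap : actE (sperm n (aF k μ i)) (actS (sperm n (aF k μ i)) ε).1 = ε.1 :=
          congrArg Subtype.val (actS_sperm_involutive ε)
        simpa only [hswap] using h.bruhatLE_actE_sperm (hx.2 _ hne)
    · exact (hx.2 ε hx0).mono h.aF_le_aF

end AddsBox

def partialShape (lam : ℕ → ℕ) (i c : ℕ) : ℕ → ℕ :=
  fun j => if j < i then lam j else if j = i then c else 0

def rowBoxes (i c : ℕ) : List (ℕ × ℕ) := (List.range c).reverse.map fun j => (i, j + 1)

def boxFactor (n k : ℕ) (r : ℕ → ℕ → ℕ) (b : ℕ × ℕ) : Module.End F (M n k) :=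
  Thk n k (k + b.2 - b.1) - (v ^ r b.1 b.2 / qint (r b.1 b.2)) • 1

lemma rowBoxes_succ (i c : ℕ) : rowBoxes i (c + 1) = (i, c + 1) :: rowBoxes i c := by
  simp [rowBoxes, List.range_succ]

lemma boxList_succ (i : ℕ) (lam : ℕ → ℕ) :
    boxList (i + 1) lam = rowBoxes (i + 1) (lam (i + 1)) ++ boxList i lam := by
  simp [boxList, rowBoxes, List.range_succ]

lemma partialShape_self (lam : ℕ → ℕ) (i : ℕ) :
    partialShape lam i (lam i) = partialShape lam (i + 1) 0 := by
  funext j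
  simp only [partialShape]
  split_ifs <;> first | rfl | omega | (subst_vars; rfl)

section Assembly

variable {n k : ℕ} {lam : ℕ → ℕ} {r : ℕ → ℕ → ℕ}

lemma IsYoung.partialShape_succ_zero (hY : IsYoung n k lam) : partialShape lam (k + 1) 0 = lam := by
  funext j
  simp only [partialShape]
  split_ifs
  · rfl
  all_goals exact (hY.2.2 j (by omega)).symm

lemma isYoung_partialShape (hY : IsYoung n k lam) {i c : ℕ} (hc : c ≤ lam i) :
    IsYoung n k (partialShape lam i c) := by
  obtain ⟨hdec, h1, hzero⟩ := hY
  refine ⟨fun j hj => ?_, ?_, fun j hj => ?_⟩ <;> unfold partialShape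
  · have := hdec j hj
    split_ifs <;> subst_vars <;> omega
  · split_ifs <;> subst_vars <;> omega
  · have := hzero j hj
    split_ifs <;> subst_vars <;> omega

lemma IsYoung.addsBox_partialShape (hY : IsYoung n k lam) {i c : ℕ} (hi : 1 ≤ i) (hik : i ≤ k)
    (hc : c < lam i) :
    AddsBox n k (partialShape lam i c) (partialShape lam i (c + 1)) i where
  isYoung := isYoung_partialShape hY hc.le
  isYoung' := isYoung_partialShape hY hc
  one_le := hi
  le := hik
  apply_self := by simp [partialShape]
  apply_of_ne j hj := by simp [partialShape, hj]

lemma IsYoung.weightBounded_row (hY : IsYoung n k lam)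
    (hpos : ∀ i j, 1 ≤ i → 1 ≤ j → j ≤ lam i →
      0 < r i j ∧ r i (j + 1) < r i j ∧ r (i + 1) j < r i j)
    {i : ℕ} (hi : 1 ≤ i) (hik : i ≤ k) {y : M n k}
    (hy : WeightBounded n k (partialShape lam i 0) r y) :
    ∀ c ≤ lam i, WeightBounded n k (partialShape lam i c) r
      (((rowBoxes i c).map (boxFactor n k r)).prod y) := by
  intro c hc
  induction c with
  | zero => exact hy
  | succ c ih =>
    have hbox := hY.addsBox_partialShape hi hik hc
    have hμi : partialShape lam i c i = c := by simp [partialShape]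
    have hρ : 0 < r i (c + 1) := (hpos i (c + 1) hi (by omega) hc).1
    have hrow : 1 ≤ c → r i (c + 1) < r i c := fun hc1 => (hpos i c hi hc1 (by omega)).2.1
    have hcol : 2 ≤ i → r i (c + 1) < r (i - 1) (c + 1) := fun hi2 => by
      have habove := hY.1 (i - 1) (by omega)
      rw [Nat.sub_add_cancel hi] at habove
      simpa only [Nat.sub_add_cancel hi] using
        (hpos (i - 1) (c + 1) (by omega) (by omega) (by omega)).2.2
    have hstep := hbox.weightBounded_step (by rwa [hμi]) (by rwa [hμi]) (by rwa [hμi])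
      (ih (by omega))
    rw [aF_of_le hik, hμi, show k + c + 1 - i = k + (c + 1) - i by omega] at hstep
    rw [rowBoxes_succ, List.map_cons, List.prod_cons, Module.End.mul_apply]
    exact hstep
lemma weightBounded_oneS (hkn : k ≤ n) (lam : ℕ → ℕ) (r : ℕ → ℕ → ℕ) :
    WeightBounded n k (partialShape lam 1 0) r (bv (oneS n k hkn)) := by
  refine ⟨fun ε => ?_, fun ε hne => ?_⟩
  · have hw : weight n k (partialShape lam 1 0) r ε.1 = 0 :=
      Finset.sum_eq_zero fun t _ => weightT_eq_zero_of_forall_eq_zero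
        (fun i hi => by simp [partialShape]; omega) _ _
    rw [hw, bv, Pi.single_apply]
    split_ifs
    · exact Ozero.one_mem
    · exact Ozero.zero_mem 0
  · obtain rfl : ε = oneS n k hkn := by
      by_contra h
      exact hne (Pi.single_eq_of_ne h _)
    exact bruhatLE_oneSeq _

lemma IsYoung.weightBounded_rows (hY : IsYoung n k lam)
    (hpos : ∀ i j, 1 ≤ i → 1 ≤ j → j ≤ lam i →
      0 < r i j ∧ r i (j + 1) < r i j ∧ r (i + 1) j < r i j) (hkn : k ≤ n) :
    ∀ i ≤ k, WeightBounded n k (partialShape lam (i + 1) 0) r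
      (((boxList i lam).map (boxFactor n k r)).prod (bv (oneS n k hkn)))
  | 0, _ => weightBounded_oneS hkn lam r
  | i + 1, hi => by
    rw [boxList_succ, List.map_append, List.prod_append, Module.End.mul_apply,
      ← partialShape_self]
    exact hY.weightBounded_row hpos (by omega) hi (hY.weightBounded_rows hpos hkn i (by omega))
      _ le_rfl

end Assembly

theorem kl_weight_bound_general (n k : ℕ) (hkn : k < n)
    (lam : ℕ → ℕ) (hY : IsYoung n k lam) (r : ℕ → ℕ → ℕ)
    (hpos : ∀ i j, 1 ≤ i → 1 ≤ j → j ≤ lam i →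
      0 < r i j ∧ r i (j + 1) < r i j ∧ r (i + 1) j < r i j) :
    Xop n k lam r (bv (oneS n k hkn.le)) ∈ Lset n k lam r := by
  have h := hY.weightBounded_rows hpos hkn.le k le_rfl
  rw [hY.partialShape_succ_zero] at h
  exact h.1

/-- For any positive integers r_(ij) on the boxes of λ with
r_(ij) > r_(i,j+1) and r_(ij) > r_(i+1,j) (and r = 0 off λ), X_λ·𝟏 ∈ 𝓛_λ. -/
theorem kl_weight_bound (n k : ℕ) (hk : 0 < k) (hkn : k < n)
    (lam : ℕ → ℕ) (hY : IsYoung n k lam) (r : ℕ → ℕ → ℕ)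
    (hpos : ∀ i j, 1 ≤ i → 1 ≤ j → j ≤ lam i →
      0 < r i j ∧ r i (j + 1) < r i j ∧ r (i + 1) j < r i j)
    (hoff : ∀ i j, ¬(1 ≤ i ∧ 1 ≤ j ∧ j ≤ lam i) → r i j = 0) :
    Xop n k lam r (bv (oneS n k hkn.le)) ∈ Lset n k lam r :=
  kl_weight_bound_general n k hkn lam hY r hpos

end
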